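/- arXiv:math/9906180 — 5 statements merged into one kernel-verified Lean document; each statement's English description precedes it below -/
import Mathlib

section
/- Let B be a ring (or C*-algebra) with a closed two-sided ideal I and quotient map π : B → B/I. Suppose v ∈ B is a partial isometry (v = v v* v) such that there exists r ∈ B with 1 − v*v = r*r and r r* ≤ 1 − v v*. If π(v)*π(v) = 1 (i.e. π(v) is an isometry in B/I), then r ∈ I and z := v + r is an isometry in B (z*z = 1) with π(z) = π(v). -/
/-- Let `B` be a unital C*-algebra, `I` a closed two-sided ideal with
quotient map `π : B → B/I` (realized as a surjective star-preserving ring homomorphism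
onto a *-ring `C` in which `x* x = 0 → x = 0`, with `I` its kernel).  Let `v` be a
partial isometry and `r ∈ B` with `1 - v* v = r* r` and `r r* ≤ 1 - v v*`.  If `π v` is
an isometry, then `r ∈ I` and `z := v + r` is an isometry in `B` with `π z = π v`. -/
theorem isometry_lift_of_partial_isometry
    {B C : Type*} [CStarAlgebra B] [PartialOrder B] [StarOrderedRing B]
    [Ring C] [StarRing C]
    (hCfaith : ∀ c : C, star c * c = 0 → c = 0)
    (π : B →+* C) (hπstar : ∀ x : B, π (star x) = star (π x))
    (hπsurj : Function.Surjective π)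
    (I : Set B) (hI : I = {x : B | π x = 0})
    (v : B) (hv : v * star v * v = v)
    (r : B) (hr₁ : 1 - star v * v = star r * r) (hr₂ : r * star r ≤ 1 - v * star v)
    (hiso : star (π v) * π v = 1) :
    r ∈ I ∧ star (v + r) * (v + r) = 1 ∧ π (v + r) = π v := by
  -- π r = 0
  have hπr : π r = 0 := by
    apply hCfaith
    rw [← hπstar, ← map_mul, ← hr₁, map_sub, map_one, map_mul, hπstar, hiso, sub_self]
  -- v* r = 0
  have hvr : star r * v = 0 := by
    have h1 : star v * (r * star r) * v ≤ star v * (1 - v * star v) * v :=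
      star_left_conjugate_le_conjugate hr₂ v
    have h2 : star v * (1 - v * star v) * v = 0 := by
      have : star v * (v * star v * v) = star v * v := by rw [hv]
      rw [mul_assoc] at this
      have h : star v * ((1 - v * star v) * v) = star v * v - star v * (v * (star v * v)) := by
        noncomm_ring
      rw [mul_assoc, h, this, sub_self]
    have h3 : star (star r * v) * (star r * v) = star v * (r * star r) * v := by
      simp [mul_assoc]
    have h4 : star (star r * v) * (star r * v) ≤ 0 := by rw [h3]; rw [h2] at h1; exact h1
    have h5 : star (star r * v) * (star r * v) = 0 :=
      le_antisymm h4 (star_mul_self_nonneg _)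
    exact CStarRing.star_mul_self_eq_zero_iff _ |>.mp h5
  have hvr' : star v * r = 0 := by
    have := congrArg star hvr
    simpa using this
  refine ⟨by rw [hI]; exact hπr, ?_, by rw [map_add, hπr, add_zero]⟩
  have : star (v + r) * (v + r) =
      star v * v + star v * r + star r * v + star r * r := by
    simp only [star_add, add_mul, mul_add]; abel
  rw [this, hvr, hvr', ← hr₁]
  abel
end

section
/- Let K be a compact convex set (in a locally convex real topological vector space) and let f, g : K → ℝ ∪ {∞} be affine functions, each of which is the pointwise supremum of an increasing sequence of continuous real-valued affine functions on K. If f and g agree on the set of extreme points of K, then f = g on all of K. -/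
/-- `f : K → ℝ ∪ {∞}` (as `EReal`) is the pointwise supremum on `K` of an increasing
sequence of continuous real-valued affine functions on `K`. -/
def IsIncreasingSupOfContAffine {E : Type*} [AddCommGroup E] [Module ℝ E]
    [TopologicalSpace E] (K : Set E) (f : E → EReal) : Prop :=
  ∃ u : ℕ → (E → ℝ),
    (∀ n, ContinuousOn (u n) K) ∧
    (∀ n, ∀ x ∈ K, ∀ y ∈ K, ∀ t : ℝ, 0 ≤ t → t ≤ 1 →
      u n (t • x + (1 - t) • y) = t * u n x + (1 - t) * u n y) ∧
    (∀ x ∈ K, Monotone fun n => u n x) ∧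
    (∀ x ∈ K, f x = ⨆ n, (u n x : EReal))

/-- Key real-valued lemma: if `h m` is an increasing sequence of continuous affine functions
on a compact convex `K` whose pointwise supremum is `≥ 0` (in the `∀ ε` sense) on the extreme
points of `K`, then the same holds on all of `K`. -/
theorem key_sup_nonneg
    {E : Type*} [AddCommGroup E] [Module ℝ E] [TopologicalSpace E]
    [IsTopologicalAddGroup E] [ContinuousSMul ℝ E] [T2Space E] [LocallyConvexSpace ℝ E]
    (K : Set E) (hKcp : IsCompact K) (hKcv : Convex ℝ K)
    (h : ℕ → E → ℝ)
    (hcont : ∀ m, ContinuousOn (h m) K)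
    (haff : ∀ m, ∀ x ∈ K, ∀ y ∈ K, ∀ t : ℝ, 0 ≤ t → t ≤ 1 →
      h m (t • x + (1 - t) • y) = t * h m x + (1 - t) * h m y)
    (hmono : ∀ x ∈ K, Monotone fun m => h m x)
    (hext : ∀ x ∈ Set.extremePoints ℝ K, ∀ ε > 0, ∃ m, -ε < h m x) :
    ∀ x ∈ K, ∀ ε > 0, ∃ m, -ε < h m x := by
  by_contra hcon
  push_neg at hcon
  obtain ⟨x₀, hx₀K, ε, hε, hbd⟩ := hcon
  -- The set of levels dominating the sup of `h` at some point of `K`.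
  set A : Set ℝ := {c : ℝ | ∃ x ∈ K, ∀ m, h m x ≤ c} with hA
  have hAne : A.Nonempty := ⟨-ε, x₀, hx₀K, hbd⟩
  obtain ⟨z, hzK, hz⟩ := hKcp.exists_isMinOn ⟨x₀, hx₀K⟩ (hcont 0)
  have hAbdd : BddBelow A := by
    refine ⟨h 0 z, fun c hc => ?_⟩
    obtain ⟨x, hxK, hx⟩ := hc
    exact le_trans (hz hxK) (hx 0)
  set M : ℝ := sInf A with hM
  have hMε : M ≤ -ε := csInf_le hAbdd ⟨x₀, hx₀K, hbd⟩
  -- key property of the infimum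
  have hstar : ∀ y ∈ K, ∀ c : ℝ, c < M → ∃ m, c < h m y := by
    intro y hyK c hc
    by_contra hcc
    push_neg at hcc
    exact absurd (csInf_le hAbdd ⟨y, hyK, hcc⟩) (not_le.2 hc)
  -- The minimizing set
  set S : Set E := ⋂ m, (K ∩ (h m) ⁻¹' Set.Iic M) with hS
  have hSsub : S ⊆ K := fun x hx => (Set.mem_iInter.1 hx 0).1
  have hSmem : ∀ x, x ∈ S ↔ x ∈ K ∧ ∀ m, h m x ≤ M := by
    intro x
    simp only [hS, Set.mem_iInter, Set.mem_inter_iff, Set.mem_preimage, Set.mem_Iic]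
    constructor
    · intro hx; exact ⟨(hx 0).1, fun m => (hx m).2⟩
    · intro hx m; exact ⟨hx.1, hx.2 m⟩
  have hScl : IsClosed S := by
    apply isClosed_iInter
    intro m
    exact (hcont m).preimage_isClosed_of_isClosed hKcp.isClosed isClosed_Iic
  -- S is nonempty, by Cantor's intersection theorem
  have hSne : S.Nonempty := by
    set F : ℕ → Set E := fun n => ⋂ m, (K ∩ (h m) ⁻¹' Set.Iic (M + 1 / (n + 1))) with hF
    have hFcl : ∀ n, IsClosed (F n) := by
      intro n
      apply isClosed_iInter
      intro m
      exact (hcont m).preimage_isClosed_of_isClosed hKcp.isClosed isClosed_Iic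
    have hFmem : ∀ n x, x ∈ F n ↔ x ∈ K ∧ ∀ m, h m x ≤ M + 1 / (n + 1) := by
      intro n x
      simp only [hF, Set.mem_iInter, Set.mem_inter_iff, Set.mem_preimage, Set.mem_Iic]
      constructor
      · intro hx; exact ⟨(hx 0).1, fun m => (hx m).2⟩
      · intro hx m; exact ⟨hx.1, hx.2 m⟩
    have hFne : ∀ n, (F n).Nonempty := by
      intro n
      have h1 : M < M + 1 / (n + 1) := by
        have : (0 : ℝ) < 1 / (n + 1) := by positivity
        linarith
      obtain ⟨c, hcA, hc⟩ := (csInf_lt_iff hAbdd hAne).1 h1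
      obtain ⟨x, hxK, hx⟩ := hcA
      exact ⟨x, (hFmem n x).2 ⟨hxK, fun m => le_trans (hx m) hc.le⟩⟩
    have hFanti : ∀ n, F (n + 1) ⊆ F n := by
      intro n x hx
      rw [hFmem] at hx ⊢
      refine ⟨hx.1, fun m => le_trans (hx.2 m) ?_⟩
      push_cast
      have h0 : (0 : ℝ) < (n : ℝ) + 1 := by positivity
      have := one_div_le_one_div_of_le h0 (by linarith : (n : ℝ) + 1 ≤ (n : ℝ) + 1 + 1)
      linarith
    have := IsCompact.nonempty_iInter_of_sequence_nonempty_isCompact_isClosed F hFanti hFne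
      (hKcp.of_isClosed_subset (hFcl 0) (fun x hx => ((hFmem 0 x).1 hx).1)) hFcl
    obtain ⟨x, hx⟩ := this
    refine ⟨x, (hSmem x).2 ⟨((hFmem 0 x).1 (Set.mem_iInter.1 hx 0)).1, fun m => ?_⟩⟩
    by_contra hmx
    push_neg at hmx
    obtain ⟨n, hn⟩ := exists_nat_one_div_lt (sub_pos.2 hmx)
    have := ((hFmem n x).1 (Set.mem_iInter.1 hx n)).2 m
    push_cast at hn this
    linarith
  -- S is convex
  have hSconvex : Convex ℝ S := by
    intro x hx y hy a b ha hb hab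
    rw [hSmem] at hx hy ⊢
    have hb' : b = 1 - a := by linarith
    subst hb'
    refine ⟨hKcv hx.1 hy.1 ha hb hab, fun m => ?_⟩
    rw [haff m x hx.1 y hy.1 a ha (by linarith)]
    have h1 := hx.2 m
    have h2 := hy.2 m
    nlinarith
  -- S is an extreme subset of K
  have hSext : IsExtreme ℝ K S := by
    have main : ∀ x₁ ∈ K, ∀ x₂ ∈ K, ∀ a b : ℝ, 0 < a → 0 < b → a + b = 1 →
        a • x₁ + b • x₂ ∈ S → x₁ ∈ S := by
      intro x₁ hx₁ x₂ hx₂ a b ha hb hab hmemS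
      rw [hSmem] at hmemS ⊢
      refine ⟨hx₁, fun m₀ => ?_⟩
      by_contra hm₀
      push_neg at hm₀
      set a' : ℝ := h m₀ x₁ - M with ha'
      have ha'pos : 0 < a' := by simp only [ha']; linarith
      have hc : M - a * a' / (2 * b) < M := by
        have : 0 < a * a' / (2 * b) := by positivity
        linarith
      obtain ⟨m₁, hm₁⟩ := hstar x₂ hx₂ _ hc
      set m : ℕ := max m₀ m₁ with hm
      have h1 : h m₀ x₁ ≤ h m x₁ := hmono x₁ hx₁ (le_max_left m₀ m₁)
      have h2 : h m₁ x₂ ≤ h m x₂ := hmono x₂ hx₂ (le_max_right m₀ m₁)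
      have hb' : b = 1 - a := by linarith
      have haffm := haff m x₁ hx₁ x₂ hx₂ a ha.le (by linarith)
      rw [← hb'] at haffm
      have hle := hmemS.2 m
      rw [haffm] at hle
      have g1 : a * (M + a') ≤ a * h m x₁ :=
        mul_le_mul_of_nonneg_left (by simp only [ha']; linarith) ha.le
      have g2 : b * (M - a * a' / (2 * b)) ≤ b * h m x₂ :=
        mul_le_mul_of_nonneg_left (by linarith) hb.le
      have e1 : b * (M - a * a' / (2 * b)) = b * M - a * a' / 2 := by
        field_simp
      have e2 : a * M + b * M = M := by rw [← add_mul, hab, one_mul]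
      nlinarith [g1, g2, e1, e2, mul_pos ha ha'pos, hle]
    constructor
    · exact hSsub
    · rintro x₁ hx₁ x₂ hx₂ x hxS ⟨a, b, ha, hb, hab, hx⟩
      rw [← hx] at hxS
      exact main x₁ hx₁ x₂ hx₂ a b ha hb hab hxS
  -- S is compact, so has an extreme point, which is an extreme point of K
  have hScp : IsCompact S := hKcp.of_isClosed_subset hScl hSsub
  obtain ⟨y, hy⟩ := hScp.extremePoints_nonempty hSne
  have hyK : y ∈ Set.extremePoints ℝ K := hSext.extremePoints_subset_extremePoints hy
  have hyS : y ∈ S := hy.1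
  obtain ⟨m, hm⟩ := hext y hyK ε hε
  have := ((hSmem y).1 hyS).2 m
  linarith

theorem le_on_of_eq_on_extremePoints_aux
    {E : Type*} [AddCommGroup E] [Module ℝ E] [TopologicalSpace E]
    [IsTopologicalAddGroup E] [ContinuousSMul ℝ E] [T2Space E] [LocallyConvexSpace ℝ E]
    (K : Set E) (hKcp : IsCompact K) (hKcv : Convex ℝ K)
    (f g : E → EReal)
    (hf : IsIncreasingSupOfContAffine K f) (hg : IsIncreasingSupOfContAffine K g)
    (hfg : ∀ x ∈ Set.extremePoints ℝ K, f x = g x) :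
    ∀ x ∈ K, f x ≤ g x := by
  obtain ⟨u, hu_cont, hu_aff, hu_mono, hu_sup⟩ := hf
  obtain ⟨v, hv_cont, hv_aff, hv_mono, hv_sup⟩ := hg
  intro x hxK
  rw [hu_sup x hxK, hv_sup x hxK]
  refine iSup_le fun n => ?_
  -- apply the key lemma to `h m = v m - u n`
  have key := key_sup_nonneg K hKcp hKcv (fun m y => v m y - u n y)
    (fun m => (hv_cont m).sub (hu_cont n))
    (by
      intro m y hy z hz t ht0 ht1
      show v m (t • y + (1 - t) • z) - u n (t • y + (1 - t) • z) =
        t * (v m y - u n y) + (1 - t) * (v m z - u n z)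
      rw [hv_aff m y hy z hz t ht0 ht1, hu_aff n y hy z hz t ht0 ht1]
      ring)
    (by
      intro y hy m₁ m₂ hle
      exact sub_le_sub_right (hv_mono y hy hle) _)
    (by
      intro y hy ε hε
      have hyK : y ∈ K := hy.1
      have h1 : ((u n y - ε : ℝ) : EReal) < ⨆ m, ((v m y : ℝ) : EReal) := by
        calc ((u n y - ε : ℝ) : EReal) < ((u n y : ℝ) : EReal) := by
              exact_mod_cast sub_lt_self _ hε
          _ ≤ ⨆ k, ((u k y : ℝ) : EReal) := le_iSup (fun k => ((u k y : ℝ) : EReal)) n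
          _ = f y := (hu_sup y hyK).symm
          _ = g y := hfg y hy
          _ = ⨆ m, ((v m y : ℝ) : EReal) := hv_sup y hyK
      obtain ⟨m, hm⟩ := lt_iSup_iff.1 h1
      refine ⟨m, ?_⟩
      show -ε < v m y - u n y
      have : (u n y - ε : ℝ) < v m y := by exact_mod_cast hm
      linarith)
    x hxK
  by_contra hcon
  push_neg at hcon
  obtain ⟨c, hc1, hc2⟩ := EReal.lt_iff_exists_real_btwn.1 hcon
  have hcR : c < u n x := by exact_mod_cast hc2
  obtain ⟨m, hm⟩ := key (u n x - c) (by linarith)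
  have hm' : -(u n x - c) < v m x - u n x := hm
  have hmc : (c : EReal) < ((v m x : ℝ) : EReal) := by
    exact_mod_cast (by linarith [hm'] : c < v m x)
  exact absurd (lt_trans (lt_of_lt_of_le hmc (le_iSup (fun m => ((v m x : ℝ) : EReal)) m)) hc1)
    (lt_irrefl _)

/-- two affine functions `K → ℝ ∪ {∞}` on a compact convex subset of a
locally convex Hausdorff space, each a pointwise supremum of an increasing sequence of
continuous affine real-valued functions, agreeing on the extreme points of `K`, agree
on all of `K`. -/
theorem eq_on_of_eq_on_extremePoints
    {E : Type*} [AddCommGroup E] [Module ℝ E] [TopologicalSpace E]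
    [IsTopologicalAddGroup E] [ContinuousSMul ℝ E] [T2Space E] [LocallyConvexSpace ℝ E]
    (K : Set E) (hKcp : IsCompact K) (hKcv : Convex ℝ K)
    (f g : E → EReal)
    (hf : IsIncreasingSupOfContAffine K f) (hg : IsIncreasingSupOfContAffine K g)
    (hfg : ∀ x ∈ Set.extremePoints ℝ K, f x = g x) :
    ∀ x ∈ K, f x = g x := by
  intro x hx
  exact le_antisymm
    (le_on_of_eq_on_extremePoints_aux K hKcp hKcv f g hf hg hfg x hx)
    (le_on_of_eq_on_extremePoints_aux K hKcp hKcv g f hg hf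
      (fun y hy => (hfg y hy).symm) x hx)
end

section
/- Let K be a Choquet simplex, s ∈ ∂ₑK, and suppose the complementary face {s}' of {s} is closed, so that Aff(K) ≅ Aff({s}) × Aff({s}'). Then for every k ∈ ℕ there exists a lower semicontinuous affine function e : K → (0, ∞] with e(s) = ∞ and e ≡ k on {s}'. Consequently, if g, h, f, d : K → (0,∞] are affine lower semicontinuous with f + g = f + h = d, d finite on ∂ₑK except at s, g finite on ∂ₑK, and h(s) = ∞, then g + e = h + k and e + d = k + d for this e and some k ∈ ℕ. -/
open MeasureTheory

/-- `K` is a (metrizable) Choquet simplex: a compact convex set in which every point is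
the barycenter of a unique probability measure supported on the closure of the extreme
points of `K`. -/
def IsChoquetSimplex {E : Type*} [AddCommGroup E] [Module ℝ E] [TopologicalSpace E]
    [MeasurableSpace E] (K : Set E) : Prop :=
  IsCompact K ∧ Convex ℝ K ∧
    ∀ x ∈ K, ∃! μ : ProbabilityMeasure E,
      μ (closure (Set.extremePoints ℝ K)) = 1 ∧
      ∀ f : E →L[ℝ] ℝ, ∫ y, f y ∂(μ : Measure E) = f x

/-- The complementary face of the singleton face `{s}` in `K`. -/
def compFacePt {E : Type*} [AddCommGroup E] [Module ℝ E] (K : Set E) (s : E) : Set E :=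
  {x ∈ K | ¬ ∃ t ∈ Set.Ioc (0 : ℝ) 1, ∃ z ∈ K, x = t • s + (1 - t) • z}

/-- A function `K → (0,∞]` in `LAff(K)⁺⁺`: strictly positive, and the pointwise
supremum on `K` of an increasing sequence of continuous affine real functions (on a
metrizable Choquet simplex every affine lower semicontinuous function is of this form). -/
def IsLAffPP {E : Type*} [AddCommGroup E] [Module ℝ E] [TopologicalSpace E]
    (K : Set E) (f : E → EReal) : Prop :=
  (∀ x ∈ K, 0 < f x) ∧
  ∃ u : ℕ → (E → ℝ),
    (∀ n, ContinuousOn (u n) K) ∧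
    (∀ n, ∀ x ∈ K, ∀ y ∈ K, ∀ t : ℝ, 0 ≤ t → t ≤ 1 →
      u n (t • x + (1 - t) • y) = t * u n x + (1 - t) * u n y) ∧
    (∀ x ∈ K, Monotone fun n => u n x) ∧
    (∀ x ∈ K, f x = ⨆ n, (u n x : EReal))


open Set Filter Topology

section AuxLemmas


lemma my_iSup_ne_bot (a : ℕ → ℝ) : (⨆ n, ((a n : EReal))) ≠ ⊥ :=
  fun h => by simpa [h] using le_iSup (fun n => ((a n : EReal))) 0

lemma my_sup_add_sup (a b : ℕ → ℝ) (ha : Monotone a) (hb : Monotone b) :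
    (⨆ n, ((a n : EReal))) + (⨆ n, ((b n : EReal))) = ⨆ n, (((a n + b n : ℝ) : EReal)) := by
  have hta : Tendsto (fun n => ((a n : EReal))) atTop (𝓝 (⨆ n, ((a n : EReal)))) :=
    tendsto_atTop_iSup (fun _ _ h => EReal.coe_le_coe_iff.2 (ha h))
  have htb : Tendsto (fun n => ((b n : EReal))) atTop (𝓝 (⨆ n, ((b n : EReal)))) :=
    tendsto_atTop_iSup (fun _ _ h => EReal.coe_le_coe_iff.2 (hb h))
  have hcont : ContinuousAt (fun p : EReal × EReal => p.1 + p.2)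
      ((⨆ n, ((a n : EReal))), (⨆ n, ((b n : EReal)))) :=
    EReal.continuousAt_add (Or.inr (my_iSup_ne_bot b)) (Or.inl (my_iSup_ne_bot a))
  have h1 : Tendsto (fun n => ((a n : EReal)) + ((b n : EReal))) atTop
      (𝓝 ((⨆ n, ((a n : EReal))) + (⨆ n, ((b n : EReal))))) :=
    (hcont.tendsto.comp (hta.prodMk_nhds htb))
  have h2 : Tendsto (fun n => (((a n + b n : ℝ) : EReal))) atTop
      (𝓝 (⨆ n, (((a n + b n : ℝ) : EReal)))) :=
    tendsto_atTop_iSup (fun _ _ h => EReal.coe_le_coe_iff.2 (add_le_add (ha h) (hb h)))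
  have : (fun n => (((a n + b n : ℝ) : EReal))) = fun n => ((a n : EReal)) + ((b n : EReal)) := by
    funext n; exact EReal.coe_add _ _
  rw [this] at h2
  exact tendsto_nhds_unique h1 h2

lemma my_sup_add_const (a : ℕ → ℝ) (ha : Monotone a) (c : ℝ) :
    (⨆ n, ((a n : EReal))) + (c : EReal) = ⨆ n, (((a n + c : ℝ) : EReal)) := by
  have := my_sup_add_sup a (fun _ => c) ha monotone_const
  simpa using this

lemma my_coe_le_add_iff (c : ℝ) (y : EReal) : (c : EReal) ≤ y + c ↔ 0 ≤ y := by
  induction y with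
  | bot => simp
  | coe r =>
      rw [show ((r : EReal) + c) = ((r + c : ℝ) : EReal) from (EReal.coe_add r c).symm]
      rw [EReal.coe_le_coe_iff]
      constructor
      · intro h; exact_mod_cast by linarith
      · intro h; have : (0:ℝ) ≤ r := by exact_mod_cast h
        linarith
  | top => simp [EReal.coe_add_top]

lemma my_iSup_coe_eq_top_of_unbounded (a : ℕ → ℝ) (h : ∀ B : ℝ, ∃ n, B < a n) :
    (⨆ n, ((a n : EReal))) = ⊤ := by
  rw [iSup_eq_top]
  intro b hb
  induction b with
  | bot => exact ⟨0, bot_lt_iff_ne_bot.2 (EReal.coe_ne_bot _)⟩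
  | coe r => obtain ⟨n, hn⟩ := h r; exact ⟨n, EReal.coe_lt_coe_iff.2 hn⟩
  | top => exact absurd hb (lt_irrefl _)

lemma my_unbounded_of_iSup_top (a : ℕ → ℝ) (h : (⨆ n, ((a n : EReal))) = ⊤) :
    ∀ B : ℝ, ∃ n, B < a n := by
  intro B
  have := iSup_eq_top |>.1 h (B : EReal) (EReal.coe_lt_top B)
  obtain ⟨n, hn⟩ := this
  exact ⟨n, EReal.coe_lt_coe_iff.1 hn⟩

variable {E : Type*} [AddCommGroup E] [Module ℝ E] [TopologicalSpace E]
    [IsTopologicalAddGroup E] [ContinuousSMul ℝ E] [T2Space E] [LocallyConvexSpace ℝ E]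
    [TopologicalSpace.MetrizableSpace E] [MeasurableSpace E] [BorelSpace E]

set_option linter.unusedSectionVars false

lemma my_integrable_of_compact_support {K : Set E} (hKc : IsCompact K)
    (μ : Measure E) [IsProbabilityMeasure μ] (hμK : μ Kᶜ = 0)
    {F : Type*} [NormedAddCommGroup F] [SecondCountableTopology F] (g : E → F)
    (hg : Continuous g) : Integrable g μ := by
  obtain ⟨C, hC⟩ := hKc.exists_bound_of_continuousOn hg.continuousOn
  refine Integrable.mono' (integrable_const C) hg.aestronglyMeasurable ?_
  have : ∀ᵐ y ∂μ, y ∈ K := by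
    rw [ae_iff]; exact hμK
  filter_upwards [this] with y hy using hC y hy

lemma my_exists_barycenter {K : Set E} (hKc : IsCompact K) (hKconv : Convex ℝ K)
    (μ : Measure E) [IsProbabilityMeasure μ] (hμK : μ Kᶜ = 0) :
    ∃ z ∈ K, ∀ f : E →L[ℝ] ℝ, ∫ y, f y ∂μ = f z := by
  classical
  have hae : ∀ᵐ y ∂μ, y ∈ K := by rw [ae_iff]; exact hμK
  have hKclosed : IsClosed K := hKc.isClosed
  set t : Finset (E →L[ℝ] ℝ) → Set E :=
    fun F => K ∩ ⋂ f ∈ F, {z | (f : E →L[ℝ] ℝ) z = ∫ y, f y ∂μ} with ht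
  have htsub : ∀ F, t F ⊆ K := fun F => inter_subset_left
  have htclosed : ∀ F, IsClosed (t F) := fun F =>
    hKclosed.inter (isClosed_biInter fun f _ => isClosed_eq f.continuous continuous_const)
  have htcompact : ∀ F, IsCompact (t F) :=
    fun F => IsCompact.of_isClosed_subset hKc (htclosed F) (htsub F)
  have htmem : ∀ F z, z ∈ t F ↔ z ∈ K ∧ ∀ f ∈ F, (f : E →L[ℝ] ℝ) z = ∫ y, f y ∂μ := by
    intro F z; simp [ht, mem_iInter]
  have htne : ∀ F, (t F).Nonempty := by
    intro F
    set T : E →L[ℝ] (F → ℝ) := ContinuousLinearMap.pi (fun f => (f : E →L[ℝ] ℝ)) with hT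
    have hTint : Integrable (fun y => T y) μ :=
      my_integrable_of_compact_support hKc μ hμK _ T.continuous
    have himg : Convex ℝ (T '' K) := hKconv.linear_image T.toLinearMap
    have himgcl : IsClosed (T '' K) := (hKc.image T.continuous).isClosed
    have hmem : ∀ᵐ y ∂μ, T y ∈ T '' K := by
      filter_upwards [hae] with y hy using mem_image_of_mem _ hy
    have hint_mem : (∫ y, T y ∂μ) ∈ T '' K := himg.integral_mem himgcl hmem hTint
    obtain ⟨z, hzK, hz⟩ := hint_mem
    refine ⟨z, (htmem F z).2 ⟨hzK, fun f hf => ?_⟩⟩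
    have hproj := (ContinuousLinearMap.proj (R := ℝ) (φ := fun _ : F => ℝ)
      (⟨f, hf⟩ : F)).integral_comp_comm hTint
    have : (∫ y, (T y) (⟨f, hf⟩ : F) ∂μ) = (∫ y, T y ∂μ) (⟨f, hf⟩ : F) := hproj
    rw [← hz] at this
    simpa [hT, ContinuousLinearMap.pi_apply] using this.symm
  obtain ⟨z, hz⟩ := IsCompact.nonempty_iInter_of_directed_nonempty_isCompact_isClosed t
    (fun F G => ⟨F ∪ G,
      fun z hz => ((htmem _ z).2 ⟨((htmem _ z).1 hz).1,
        fun f hf => ((htmem _ z).1 hz).2 f (Finset.mem_union_left _ hf)⟩),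
      fun z hz => ((htmem _ z).2 ⟨((htmem _ z).1 hz).1,
        fun f hf => ((htmem _ z).1 hz).2 f (Finset.mem_union_right _ hf)⟩)⟩)
    htne htcompact htclosed
  simp only [mem_iInter] at hz
  have hzK : z ∈ K := ((htmem ∅ z).1 (hz ∅)).1
  exact ⟨z, hzK, fun f => (((htmem {f} z).1 (hz {f})).2 f (Finset.mem_singleton_self f)).symm⟩

open Classical in
noncomputable def myLam {K : Set E} (hK : IsChoquetSimplex K) (s : E) (x : E) : ℝ :=
  if hx : x ∈ K then (((hK.2.2 x hx).exists.choose : Measure E) {s}).toReal else 0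

lemma myLam_spec {K : Set E} (hK : IsChoquetSimplex K) (s : E) {x : E} (hx : x ∈ K) :
    ∃ μ : Measure E, IsProbabilityMeasure μ ∧
      μ (closure (Set.extremePoints ℝ K)) = 1 ∧
      (∀ f : E →L[ℝ] ℝ, ∫ y, f y ∂μ = f x) ∧
      myLam hK s x = (μ {s}).toReal ∧
      (∀ ν : Measure E, IsProbabilityMeasure ν → ν (closure (Set.extremePoints ℝ K)) = 1 →
        (∀ f : E →L[ℝ] ℝ, ∫ y, f y ∂ν = f x) → ν = μ) := by
  have hprops := (hK.2.2 x hx).exists.choose_spec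
  set μ₀ : ProbabilityMeasure E := (hK.2.2 x hx).exists.choose with hμ₀
  have h1 : (μ₀ : Measure E) (closure (Set.extremePoints ℝ K)) = 1 := by
    have := congrArg ((↑) : NNReal → ENNReal) hprops.1
    rwa [ProbabilityMeasure.ennreal_coeFn_eq_coeFn_toMeasure, ENNReal.coe_one] at this
  have hlam : myLam hK s x = ((μ₀ : Measure E) {s}).toReal := by
    rw [myLam]; rw [dif_pos hx]
  refine ⟨(μ₀ : Measure E), μ₀.prop, h1, hprops.2, hlam, ?_⟩
  intro ν hνp hν1 hνf
  have hνp' : IsProbabilityMeasure ν := hνp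
  let νp : ProbabilityMeasure E := ⟨ν, hνp⟩
  have hν1' : νp (closure (Set.extremePoints ℝ K)) = 1 := by
    have h2 : (νp (closure (Set.extremePoints ℝ K)) : ENNReal) = (1 : ENNReal) := by
      rw [ProbabilityMeasure.ennreal_coeFn_eq_coeFn_toMeasure]; exact hν1
    exact_mod_cast h2
  have := (hK.2.2 x hx).unique ⟨hν1', hνf⟩ hprops
  exact congrArg (fun m : ProbabilityMeasure E => (m : Measure E)) this

lemma my_closure_subset {K : Set E} (hKc : IsCompact K) :
    closure (Set.extremePoints ℝ K) ⊆ K :=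
  closure_minimal (extremePoints_subset) hKc.isClosed

lemma my_null_compl {K : Set E} (hKc : IsCompact K) (μ : Measure E) [IsProbabilityMeasure μ]
    (h1 : μ (closure (Set.extremePoints ℝ K)) = 1) : μ Kᶜ = 0 := by
  have hm : MeasurableSet (closure (Set.extremePoints ℝ K)) :=
    isClosed_closure.measurableSet
  have hcompl : μ (closure (Set.extremePoints ℝ K))ᶜ = 0 := by
    rw [measure_compl hm (by simp [h1]), h1, measure_univ, tsub_self]
  exact measure_mono_null (Set.compl_subset_compl.2 (my_closure_subset hKc)) hcompl

lemma myLam_nonneg {K : Set E} (hK : IsChoquetSimplex K) (s x : E) : 0 ≤ myLam hK s x := by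
  rw [myLam]
  split <;> simp [ENNReal.toReal_nonneg]

lemma myLam_le_one {K : Set E} (hK : IsChoquetSimplex K) (s x : E) : myLam hK s x ≤ 1 := by
  rw [myLam]
  split
  · rename_i hx
    obtain ⟨μ, hp, h1, hint, hlam, huniq⟩ := myLam_spec hK s hx
    rw [myLam] at hlam
    rw [dif_pos hx] at hlam
    rw [hlam]
    have : μ {s} ≤ 1 := (measure_mono (Set.subset_univ _)).trans (by simp)
    calc (μ {s}).toReal ≤ (1 : ENNReal).toReal := ENNReal.toReal_mono (by simp) this
      _ = 1 := by simp
  · norm_num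

lemma myLam_self {K : Set E} (hK : IsChoquetSimplex K) {s : E}
    (hs : s ∈ Set.extremePoints ℝ K) : myLam hK s s = 1 := by
  obtain ⟨μ, hp, h1, hint, hlam, huniq⟩ := myLam_spec hK s hs.1
  have hdirac : (Measure.dirac s) = μ := by
    refine huniq _ (by infer_instance) ?_ ?_
    · rw [Measure.dirac_apply_of_mem (subset_closure hs)]
    · intro f
      exact integral_dirac _ _
  rw [hlam, ← hdirac]
  simp [Measure.dirac_apply_of_mem (Set.mem_singleton s)]

lemma myLam_affine {K : Set E} (hK : IsChoquetSimplex K) (s : E) {x y : E} (hx : x ∈ K)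
    (hy : y ∈ K) {t : ℝ} (ht0 : 0 ≤ t) (ht1 : t ≤ 1) :
    myLam hK s (t • x + (1 - t) • y) = t * myLam hK s x + (1 - t) * myLam hK s y := by
  have hKc := hK.1
  have h1t0 : (0:ℝ) ≤ 1 - t := by linarith
  have hw : t • x + (1 - t) • y ∈ K := hK.2.1 hx hy ht0 h1t0 (by ring)
  obtain ⟨μx, hpx, h1x, hintx, hlamx, _⟩ := myLam_spec hK s hx
  obtain ⟨μy, hpy, h1y, hinty, hlamy, _⟩ := myLam_spec hK s hy
  obtain ⟨μw, hpw, h1w, hintw, hlamw, huniqw⟩ := myLam_spec hK s hw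
  set m : Measure E := ENNReal.ofReal t • μx + ENNReal.ofReal (1 - t) • μy with hm
  have hmeq : m = μw := by
    refine huniqw m ⟨?_⟩ ?_ ?_
    · simp only [hm, Measure.add_apply, Measure.smul_apply, smul_eq_mul, measure_univ,
        mul_one]
      rw [← ENNReal.ofReal_add ht0 h1t0]
      norm_num
    · simp only [hm, Measure.add_apply, Measure.smul_apply, smul_eq_mul, h1x, h1y, mul_one]
      rw [← ENNReal.ofReal_add ht0 h1t0]
      norm_num
    · intro f
      have hix : Integrable (fun y => f y) μx :=
        my_integrable_of_compact_support hKc μx (my_null_compl hKc μx h1x) _ f.continuous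
      have hiy : Integrable (fun z => f z) μy :=
        my_integrable_of_compact_support hKc μy (my_null_compl hKc μy h1y) _ f.continuous
      rw [hm, integral_add_measure (hix.smul_measure ENNReal.ofReal_ne_top)
        (hiy.smul_measure ENNReal.ofReal_ne_top), integral_smul_measure,
        integral_smul_measure, hintx, hinty, ENNReal.toReal_ofReal ht0,
        ENNReal.toReal_ofReal h1t0]
      simp [smul_eq_mul]
  have hfin : ∀ (ν : Measure E), IsProbabilityMeasure ν → ν {s} ≠ ⊤ := by
    intro ν hν
    exact ((measure_mono (Set.subset_univ _)).trans_lt (by simp [measure_univ])).ne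
  rw [hlamw, ← hmeq, hm]
  simp only [Measure.add_apply, Measure.smul_apply, smul_eq_mul]
  rw [ENNReal.toReal_add (ENNReal.mul_ne_top ENNReal.ofReal_ne_top (hfin μx hpx))
    (ENNReal.mul_ne_top ENNReal.ofReal_ne_top (hfin μy hpy)),
    ENNReal.toReal_mul, ENNReal.toReal_mul, ENNReal.toReal_ofReal ht0,
    ENNReal.toReal_ofReal h1t0, hlamx, hlamy]


lemma myLam_decomp {K : Set E} (hK : IsChoquetSimplex K) {s : E}
    (hs : s ∈ Set.extremePoints ℝ K) {x : E} (hx : x ∈ K)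
    (hlt : myLam hK s x < 1) :
    ∃ z ∈ K, myLam hK s z = 0 ∧ x = myLam hK s x • s + (1 - myLam hK s x) • z := by
  have hKc := hK.1
  obtain ⟨μ, hp, h1, hint, hlam, _⟩ := myLam_spec hK s hx
  set t := myLam hK s x with htdef
  have ht0 : 0 ≤ t := myLam_nonneg hK s x
  have hane : μ {s} ≠ ⊤ :=
    ((measure_mono (Set.subset_univ _)).trans_lt (by simp [measure_univ])).ne
  have hat : (μ {s}).toReal = t := hlam.symm
  have ha_lt : μ {s} < 1 := by
    rw [← ENNReal.ofReal_toReal hane, hat]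
    exact_mod_cast ENNReal.ofReal_lt_one.2 hlt
  have h1a0 : (1 : ENNReal) - μ {s} ≠ 0 := by
    simpa [tsub_eq_zero_iff_le] using ha_lt.not_ge
  have h1at : (1 : ENNReal) - μ {s} ≠ ⊤ := by
    exact ((tsub_le_self).trans_lt (by simp)).ne
  have hcompl : μ {s}ᶜ = 1 - μ {s} := by
    rw [measure_compl (measurableSet_singleton s) hane, measure_univ]
  have h1atoReal : ((1 : ENNReal) - μ {s}).toReal = 1 - t := by
    rw [ENNReal.toReal_sub_of_le ha_lt.le (by simp), hat]
    simp
  set ν : Measure E := ((1 : ENNReal) - μ {s})⁻¹ • μ.restrict {s}ᶜ with hν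
  have hrest : μ.restrict {s}ᶜ = ((1 : ENNReal) - μ {s}) • ν := by
    rw [hν, smul_smul, ENNReal.mul_inv_cancel h1a0 h1at, one_smul]
  have hνp : IsProbabilityMeasure ν := by
    constructor
    rw [hν, Measure.smul_apply, Measure.restrict_apply_univ, hcompl, smul_eq_mul,
      ENNReal.inv_mul_cancel h1a0 h1at]
  have hν1 : ν (closure (Set.extremePoints ℝ K)) = 1 := by
    have hmS : MeasurableSet (closure (Set.extremePoints ℝ K)) :=
      isClosed_closure.measurableSet
    have hsub : {s} ⊆ closure (Set.extremePoints ℝ K) :=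
      Set.singleton_subset_iff.2 (subset_closure hs)
    have : μ (closure (Set.extremePoints ℝ K) ∩ {s}ᶜ) = 1 - μ {s} := by
      rw [← Set.diff_eq, measure_diff hsub (measurableSet_singleton s).nullMeasurableSet
        hane, h1]
    rw [hν, Measure.smul_apply, Measure.restrict_apply hmS, this, smul_eq_mul,
      ENNReal.inv_mul_cancel h1a0 h1at]
  haveI := hνp
  have hνK : ν Kᶜ = 0 := my_null_compl hKc ν hν1
  obtain ⟨z, hzK, hz⟩ := my_exists_barycenter hK.1 hK.2.1 ν hνK
  have hfx : ∀ f : E →L[ℝ] ℝ, f x = t * f s + (1 - t) * f z := by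
    intro f
    have hi : Integrable (fun y => f y) μ :=
      my_integrable_of_compact_support hKc μ (my_null_compl hKc μ h1) _ f.continuous
    have hsplit := integral_add_compl (μ := μ) (f := fun y => f y)
      (measurableSet_singleton s) hi
    have hs1 : ∫ y in {s}, f y ∂μ = t * f s := by
      rw [Measure.restrict_singleton, integral_smul_measure, integral_dirac, hat,
        smul_eq_mul]
    have hs2 : ∫ y in {s}ᶜ, f y ∂μ = (1 - t) * f z := by
      have : ∫ y in {s}ᶜ, f y ∂μ = ∫ y, f y ∂(((1 : ENNReal) - μ {s}) • ν) := by
        rw [← hrest]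
      rw [this, integral_smul_measure, h1atoReal, hz f, smul_eq_mul]
    rw [← hint f, ← hsplit, hs1, hs2]
  have hxz : x = t • s + (1 - t) • z := by
    by_contra hne
    obtain ⟨f, hf⟩ := geometric_hahn_banach_point_point hne
    have heq : f x = f (t • s + (1 - t) • z) := by
      rw [hfx f]
      simp [smul_eq_mul]
    rw [heq] at hf
    exact lt_irrefl _ hf
  refine ⟨z, hzK, ?_, hxz⟩
  have haff := myLam_affine hK s hs.1 hzK ht0 (myLam_le_one hK s x)
  rw [← hxz, myLam_self hK hs] at haff
  have h1t : (1 : ℝ) - t ≠ 0 := by linarith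
  have : (1 - t) * myLam hK s z = 0 := by
    rw [← htdef] at haff
    linarith [haff]
  exact (mul_eq_zero.1 this).resolve_left h1t

lemma myLam_eq_one_imp {K : Set E} (hK : IsChoquetSimplex K) {s : E}
    (hs : s ∈ Set.extremePoints ℝ K) {x : E} (hx : x ∈ K)
    (h1 : myLam hK s x = 1) : x = s := by
  have hKc := hK.1
  obtain ⟨μ, hp, hcl, hint, hlam, _⟩ := myLam_spec hK s hx
  have hane : μ {s} ≠ ⊤ :=
    ((measure_mono (Set.subset_univ _)).trans_lt (by simp [measure_univ])).ne
  have ha1 : μ {s} = 1 := by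
    have := hlam.symm.trans h1
    rw [← ENNReal.ofReal_toReal hane, this]
    simp
  have hcompl : μ {s}ᶜ = 0 := by
    rw [measure_compl (measurableSet_singleton s) hane, measure_univ, ha1, tsub_self]
  have hfx : ∀ f : E →L[ℝ] ℝ, f x = f s := by
    intro f
    have hi : Integrable (fun y => f y) μ :=
      my_integrable_of_compact_support hKc μ (my_null_compl hKc μ hcl) _ f.continuous
    have hsplit := integral_add_compl (μ := μ) (f := fun y => f y)
      (measurableSet_singleton s) hi
    have hs1 : ∫ y in {s}, f y ∂μ = f s := by
      rw [Measure.restrict_singleton, integral_smul_measure, integral_dirac, ha1]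
      simp
    have hs2 : ∫ y in {s}ᶜ, f y ∂μ = 0 := by
      rw [Measure.restrict_eq_zero.2 hcompl]
      simp
    rw [← hint f, ← hsplit, hs1, hs2, add_zero]
  by_contra hne
  obtain ⟨f, hf⟩ := geometric_hahn_banach_point_point hne
  rw [hfx f] at hf
  exact lt_irrefl _ hf


lemma my_s_not_mem {K : Set E} {s : E} (hs : s ∈ Set.extremePoints ℝ K) :
    s ∉ compFacePt K s := by
  intro hmem
  exact hmem.2 ⟨1, ⟨zero_lt_one, le_refl 1⟩, s, hs.1, by simp⟩

lemma myLam_pos_of_not_mem {K : Set E} (hK : IsChoquetSimplex K) {s : E}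
    (hs : s ∈ Set.extremePoints ℝ K) {x : E} (hx : x ∈ K)
    (hxF : x ∉ compFacePt K s) : 0 < myLam hK s x := by
  have : ∃ t ∈ Set.Ioc (0:ℝ) 1, ∃ z ∈ K, x = t • s + (1 - t) • z := by
    by_contra hne
    exact hxF ⟨hx, hne⟩
  obtain ⟨t, ⟨ht0, ht1⟩, z, hzK, hxeq⟩ := this
  have haff := myLam_affine hK s hs.1 hzK ht0.le ht1
  rw [← hxeq, myLam_self hK hs] at haff
  nlinarith [myLam_nonneg hK s z]

lemma myLam_zero_of_mem {K : Set E} (hK : IsChoquetSimplex K) {s : E}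
    (hs : s ∈ Set.extremePoints ℝ K) {x : E} (hx : x ∈ compFacePt K s) :
    myLam hK s x = 0 := by
  by_contra hne
  have hpos : 0 < myLam hK s x := lt_of_le_of_ne (myLam_nonneg hK s x) (Ne.symm hne)
  rcases eq_or_lt_of_le (myLam_le_one hK s x) with h1 | hlt
  · exact my_s_not_mem hs (myLam_eq_one_imp hK hs hx.1 h1 ▸ hx)
  · obtain ⟨z, hzK, hz0, hxeq⟩ := myLam_decomp hK hs hx.1 hlt
    exact hx.2 ⟨myLam hK s x, ⟨hpos, myLam_le_one hK s x⟩, z, hzK, hxeq⟩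

lemma my_closed_ge {K : Set E} (hK : IsChoquetSimplex K) {s : E}
    (hs : s ∈ Set.extremePoints ℝ K) (c : ℝ) :
    IsClosed {x | x ∈ K ∧ c ≤ myLam hK s x} := by
  rcases le_or_gt c 0 with hc0 | hc0
  · have : {x | x ∈ K ∧ c ≤ myLam hK s x} = K := by
      ext x
      exact ⟨fun h => h.1, fun h => ⟨h, hc0.trans (myLam_nonneg hK s x)⟩⟩
    rw [this]; exact hK.1.isClosed
  rcases le_or_gt c 1 with hc1 | hc1
  · have himg : {x | x ∈ K ∧ c ≤ myLam hK s x} =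
        (fun p : ℝ × E => p.1 • s + (1 - p.1) • p.2) '' (Set.Icc c 1 ×ˢ K) := by
      ext x
      constructor
      · rintro ⟨hxK, hcle⟩
        rcases eq_or_lt_of_le (myLam_le_one hK s x) with h1 | hlt
        · exact ⟨(1, s), ⟨⟨hc1, le_refl 1⟩, hs.1⟩, by
            simp [(myLam_eq_one_imp hK hs hxK h1).symm]⟩
        · obtain ⟨z, hzK, _, hxeq⟩ := myLam_decomp hK hs hxK hlt
          exact ⟨(myLam hK s x, z), ⟨⟨hcle, myLam_le_one hK s x⟩, hzK⟩, hxeq.symm⟩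
      · rintro ⟨⟨t, z⟩, ⟨⟨htc, ht1⟩, hzK⟩, rfl⟩
        have ht0 : (0:ℝ) ≤ t := hc0.le.trans htc
        refine ⟨hK.2.1 hs.1 hzK ht0 (by linarith) (by ring), ?_⟩
        have haff := myLam_affine hK s hs.1 hzK ht0 ht1
        rw [myLam_self hK hs] at haff
        nlinarith [myLam_nonneg hK s z]
    rw [himg]
    have hcontphi : Continuous (fun p : ℝ × E => p.1 • s + (1 - p.1) • p.2) :=
      (continuous_fst.smul continuous_const).add
        ((continuous_const.sub continuous_fst).smul continuous_snd)
    exact (((isCompact_Icc.prod hK.1).image hcontphi)).isClosed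
  · have : {x | x ∈ K ∧ c ≤ myLam hK s x} = ∅ := by
      ext x
      simp only [Set.mem_setOf_eq, Set.mem_empty_iff_false, iff_false, not_and, not_le]
      intro _
      exact (myLam_le_one hK s x).trans_lt hc1
    rw [this]; exact isClosed_empty

lemma my_closed_le {K : Set E} (hK : IsChoquetSimplex K) {s : E}
    (hs : s ∈ Set.extremePoints ℝ K) (hcl : IsClosed (compFacePt K s)) (c : ℝ) :
    IsClosed {x | x ∈ K ∧ myLam hK s x ≤ c} := by
  rcases lt_or_ge c 0 with hc0 | hc0
  · have : {x | x ∈ K ∧ myLam hK s x ≤ c} = ∅ := by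
      ext x
      simp only [Set.mem_setOf_eq, Set.mem_empty_iff_false, iff_false, not_and, not_le]
      intro _
      exact hc0.trans_le (myLam_nonneg hK s x)
    rw [this]; exact isClosed_empty
  rcases lt_or_ge c 1 with hc1 | hc1
  · have himg : {x | x ∈ K ∧ myLam hK s x ≤ c} =
        (fun p : ℝ × E => p.1 • s + (1 - p.1) • p.2) '' (Set.Icc 0 c ×ˢ compFacePt K s) := by
      ext x
      constructor
      · rintro ⟨hxK, hlec⟩
        have hlt : myLam hK s x < 1 := hlec.trans_lt hc1
        obtain ⟨z, hzK, hz0, hxeq⟩ := myLam_decomp hK hs hxK hlt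
        have hzF : z ∈ compFacePt K s := by
          by_contra hzF
          exact (myLam_pos_of_not_mem hK hs hzK hzF).ne' hz0
        exact ⟨(myLam hK s x, z), ⟨⟨myLam_nonneg hK s x, hlec⟩, hzF⟩, hxeq.symm⟩
      · rintro ⟨⟨t, z⟩, ⟨⟨ht0, htc⟩, hzF⟩, rfl⟩
        have ht1 : t ≤ 1 := htc.trans hc1.le
        refine ⟨hK.2.1 hs.1 hzF.1 ht0 (by linarith) (by ring), ?_⟩
        have haff := myLam_affine hK s hs.1 hzF.1 ht0 ht1
        rw [myLam_self hK hs, myLam_zero_of_mem hK hs hzF] at haff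
        rw [haff]
        linarith
    rw [himg]
    have hcontphi : Continuous (fun p : ℝ × E => p.1 • s + (1 - p.1) • p.2) :=
      (continuous_fst.smul continuous_const).add
        ((continuous_const.sub continuous_fst).smul continuous_snd)
    have hFc : IsCompact (compFacePt K s) :=
      IsCompact.of_isClosed_subset hK.1 hcl (fun x hx => hx.1)
    exact ((isCompact_Icc.prod hFc).image hcontphi).isClosed
  · have : {x | x ∈ K ∧ myLam hK s x ≤ c} = K := by
      ext x
      exact ⟨fun h => h.1, fun h => ⟨h, (myLam_le_one hK s x).trans hc1⟩⟩
    rw [this]; exact hK.1.isClosed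

lemma myLam_continuousOn {K : Set E} (hK : IsChoquetSimplex K) {s : E}
    (hs : s ∈ Set.extremePoints ℝ K) (hcl : IsClosed (compFacePt K s)) :
    ContinuousOn (myLam hK s) K := by
  intro x hx
  have : Tendsto (myLam hK s) (nhdsWithin x K) (nhds (myLam hK s x)) := by
    refine tendsto_order.2 ⟨?_, ?_⟩
    · intro a ha
      have hC : IsClosed {y | y ∈ K ∧ myLam hK s y ≤ a} := my_closed_le hK hs hcl a
      have hxC : x ∉ {y | y ∈ K ∧ myLam hK s y ≤ a} := fun h => absurd h.2 (not_le.2 ha)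
      filter_upwards [self_mem_nhdsWithin,
        mem_nhdsWithin_of_mem_nhds (hC.isOpen_compl.mem_nhds hxC)] with y hyK hyC
      by_contra hcon
      exact hyC ⟨hyK, not_lt.1 hcon⟩
    · intro a ha
      have hC : IsClosed {y | y ∈ K ∧ a ≤ myLam hK s y} := my_closed_ge hK hs a
      have hxC : x ∉ {y | y ∈ K ∧ a ≤ myLam hK s y} := fun h => absurd h.2 (not_le.2 ha)
      filter_upwards [self_mem_nhdsWithin,
        mem_nhdsWithin_of_mem_nhds (hC.isOpen_compl.mem_nhds hxC)] with y hyK hyC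
      by_contra hcon
      exact hyC ⟨hyK, not_lt.1 hcon⟩
  exact this


lemma my_bauer {K : Set E} (hKc : IsCompact K) (hKconv : Convex ℝ K)
    {u : E → ℝ} (hu_cont : ContinuousOn u K)
    (hu_aff : ∀ x ∈ K, ∀ y ∈ K, ∀ t : ℝ, 0 ≤ t → t ≤ 1 →
      u (t • x + (1 - t) • y) = t * u x + (1 - t) * u y)
    {v : ℕ → E → ℝ} (hv_cont : ∀ n, ContinuousOn (v n) K)
    (hv_aff : ∀ n, ∀ x ∈ K, ∀ y ∈ K, ∀ t : ℝ, 0 ≤ t → t ≤ 1 →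
      v n (t • x + (1 - t) • y) = t * v n x + (1 - t) * v n y)
    (hv_mono : ∀ x ∈ K, Monotone fun n => v n x)
    (hle : ∀ x ∈ Set.extremePoints ℝ K, (u x : EReal) ≤ ⨆ n, (v n x : EReal)) :
    ∀ x ∈ K, (u x : EReal) ≤ ⨆ n, (v n x : EReal) := by
  classical
  set w : ℕ → E → ℝ := fun n y => v n y - u y with hw
  set ψ : E → EReal := fun y => ⨆ n, ((w n y : ℝ) : EReal) with hψ
  have hwmono : ∀ y ∈ K, Monotone fun n => w n y := by
    intro y hy a b hab
    exact sub_le_sub_right (hv_mono y hy hab) _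
  have hiff : ∀ y ∈ K, ((u y : EReal) ≤ ⨆ n, (v n y : EReal) ↔ 0 ≤ ψ y) := by
    intro y hy
    have hsum : ψ y + (u y : EReal) = ⨆ n, (v n y : EReal) := by
      rw [hψ]
      rw [my_sup_add_const (fun n => w n y) (hwmono y hy) (u y)]
      congr 1
      funext n
      congr 1
      rw [hw]
      ring
    rw [← hsum]
    exact my_coe_le_add_iff (u y) (ψ y)
  intro x hx
  rw [hiff x hx]
  -- bound below
  obtain ⟨Cu, hCu⟩ := hKc.exists_bound_of_continuousOn hu_cont
  obtain ⟨Cv, hCv⟩ := hKc.exists_bound_of_continuousOn (hv_cont 0)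
  set m : EReal := sInf (ψ '' K) with hm
  have hmle : ∀ y ∈ K, m ≤ ψ y := fun y hy => sInf_le ⟨y, hy, rfl⟩
  have hmlb : ((-(Cv + Cu) : ℝ) : EReal) ≤ m := by
    apply le_sInf
    rintro b ⟨y, hyK, rfl⟩
    refine le_trans ?_ (le_iSup (fun n => ((w n y : ℝ) : EReal)) 0)
    rw [EReal.coe_le_coe_iff, hw]
    have h1 := hCu y hyK
    have h2 := hCv y hyK
    rw [Real.norm_eq_abs] at h1 h2
    cases abs_le.1 h1 with
    | intro h1a h1b =>
      cases abs_le.1 h2 with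
      | intro h2a h2b => simp only; linarith
  suffices hm0 : (0 : EReal) ≤ m from hm0.trans (hmle x hx)
  rcases eq_or_ne m ⊤ with hmtop | hmtop
  · rw [hmtop]; exact le_top
  have hmbot : m ≠ ⊥ := fun hbot => by simp [hbot] at hmlb
  set m₀ : ℝ := m.toReal with hm₀
  have hmeq : m = (m₀ : EReal) := (EReal.coe_toReal hmtop hmbot).symm
  -- closedness of sublevel sets
  have hclosed_sub : ∀ r : ℝ, IsClosed {y | y ∈ K ∧ ψ y ≤ (r : EReal)} := by
    intro r
    have heq : {y | y ∈ K ∧ ψ y ≤ (r : EReal)} =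
        ⋂ n, (K ∩ (fun y => w n y) ⁻¹' Set.Iic r) := by
      ext y
      simp only [Set.mem_setOf_eq, Set.mem_iInter, Set.mem_inter_iff, Set.mem_preimage,
        Set.mem_Iic, hψ, iSup_le_iff]
      constructor
      · rintro ⟨hyK, hyr⟩ n
        exact ⟨hyK, EReal.coe_le_coe_iff.1 (hyr n)⟩
      · intro h
        rcases h 0 with ⟨hyK, _⟩
        exact ⟨hyK, fun n => EReal.coe_le_coe_iff.2 (h n).2⟩
    rw [heq]
    exact isClosed_iInter fun n =>
      ContinuousOn.preimage_isClosed_of_isClosed ((hv_cont n).sub hu_cont)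
        hKc.isClosed isClosed_Iic
  -- minimum attainment
  have hattain : ∃ x0 ∈ K, ψ x0 ≤ m := by
    set A : {r : ℝ // m < (r : EReal)} → Set E :=
      fun r => {y | y ∈ K ∧ ψ y ≤ ((r : ℝ) : EReal)} with hA
    haveI : Nonempty {r : ℝ // m < (r : EReal)} :=
      ⟨⟨m₀ + 1, by rw [hmeq]; exact_mod_cast lt_add_one m₀⟩⟩
    have hAne : ∀ r, (A r).Nonempty := by
      rintro ⟨r, hr⟩
      obtain ⟨b, ⟨y, hyK, rfl⟩, hb⟩ := sInf_lt_iff.1 hr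
      exact ⟨y, hyK, hb.le⟩
    have hAclosed : ∀ r, IsClosed (A r) := fun r => hclosed_sub r
    have hAcompact : ∀ r, IsCompact (A r) := fun r =>
      IsCompact.of_isClosed_subset hKc (hAclosed r) (fun y hy => hy.1)
    have hdir : Directed (· ⊇ ·) A := by
      rintro ⟨r1, hr1⟩ ⟨r2, hr2⟩
      have hmin : m < ((min r1 r2 : ℝ) : EReal) := by
        rcases le_total r1 r2 with h | h
        · rw [min_eq_left h]; exact hr1
        · rw [min_eq_right h]; exact hr2
      refine ⟨⟨min r1 r2, hmin⟩, ?_, ?_⟩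
      · rintro y ⟨hyK, hy⟩
        exact ⟨hyK, hy.trans (EReal.coe_le_coe_iff.2 (min_le_left _ _))⟩
      · rintro y ⟨hyK, hy⟩
        exact ⟨hyK, hy.trans (EReal.coe_le_coe_iff.2 (min_le_right _ _))⟩
    obtain ⟨x0, hx0⟩ :=
      IsCompact.nonempty_iInter_of_directed_nonempty_isCompact_isClosed A hdir hAne
        hAcompact hAclosed
    simp only [Set.mem_iInter] at hx0
    have hx0K : x0 ∈ K := (hx0 ⟨m₀ + 1, by rw [hmeq]; exact_mod_cast lt_add_one m₀⟩).1
    refine ⟨x0, hx0K, ?_⟩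
    by_contra hcon
    push_neg at hcon
    obtain ⟨r, hr1, hr2⟩ := EReal.exists_between_coe_real hcon
    exact absurd ((hx0 ⟨r, hr1⟩).2) (not_le.2 hr2)
  obtain ⟨x0, hx0K, hx0⟩ := hattain
  set M : Set E := {y | y ∈ K ∧ ψ y ≤ m} with hM
  have hMclosed : IsClosed M := by
    have : M = {y | y ∈ K ∧ ψ y ≤ (m₀ : EReal)} := by rw [hM, hmeq]
    rw [this]; exact hclosed_sub m₀
  have hMcompact : IsCompact M :=
    IsCompact.of_isClosed_subset hKc hMclosed (fun y hy => hy.1)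
  have hMne : M.Nonempty := ⟨x0, hx0K, hx0⟩
  -- key step: M is extreme
  have hkey : ∀ x1 ∈ K, ∀ x2 ∈ K, ∀ a : ℝ, 0 < a → a < 1 →
      a • x1 + (1 - a) • x2 ∈ M → x2 ∈ M := by
    intro x1 hx1 x2 hx2 a ha0 ha1 hmem
    have h1a : (0:ℝ) < 1 - a := by linarith
    by_contra hcon
    have hgt : (m₀ : EReal) < ψ x2 := by
      rcases lt_or_ge (m₀ : EReal) (ψ x2) with h | h
      · exact h
      · exact absurd ⟨hx2, hmeq ▸ h⟩ hcon
    obtain ⟨n0, hn0⟩ := lt_iSup_iff.1 hgt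
    have hn0' : m₀ < w n0 x2 := EReal.coe_lt_coe_iff.1 hn0
    set δ : ℝ := w n0 x2 - m₀ with hδ
    have hδ0 : 0 < δ := by rw [hδ]; linarith
    have hup : ∀ n, w n (a • x1 + (1 - a) • x2) ≤ m₀ := by
      intro n
      have := hmem.2
      rw [hmeq] at this
      have h2 : ((w n (a • x1 + (1 - a) • x2) : ℝ) : EReal) ≤ (m₀ : EReal) :=
        le_trans (le_iSup (fun n => ((w n (a • x1 + (1 - a) • x2) : ℝ) : EReal)) n) this
      exact EReal.coe_le_coe_iff.1 h2
    have hwcomb : ∀ n, w n (a • x1 + (1 - a) • x2) = a * w n x1 + (1 - a) * w n x2 := by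
      intro n
      rw [hw]
      simp only
      rw [hv_aff n x1 hx1 x2 hx2 a ha0.le ha1.le, hu_aff x1 hx1 x2 hx2 a ha0.le ha1.le]
      ring
    set B : ℝ := m₀ - ((1 - a) * δ) / a with hB
    have hBlt : B < m₀ := by
      rw [hB]
      have : 0 < ((1 - a) * δ) / a := div_pos (mul_pos h1a hδ0) ha0
      linarith
    have hx1bound : ∀ n, w n x1 ≤ B := by
      intro n
      set N := max n n0 with hN
      have hmono1 : w n x1 ≤ w N x1 := by
        have := hv_mono x1 hx1 (le_max_left n n0)
        rw [hw]; simp only; linarith [this]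
      have hmono2 : w n0 x2 ≤ w N x2 := by
        have := hv_mono x2 hx2 (le_max_right n n0)
        rw [hw]; simp only; linarith [this]
      have hc := hup N
      rw [hwcomb N] at hc
      -- a * w N x1 + (1-a) * w N x2 ≤ m₀, w N x2 ≥ m₀ + δ
      have hwN2 : m₀ + δ ≤ w N x2 := by rw [hδ] at *; linarith
      have : a * w N x1 ≤ m₀ - (1 - a) * (m₀ + δ) := by nlinarith
      have hwN1 : w N x1 ≤ B := by
        have h' : w N x1 ≤ (m₀ - (1 - a) * (m₀ + δ)) / a :=
          (le_div_iff₀ ha0).2 (by linarith)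
        have hBeq : (m₀ - (1 - a) * (m₀ + δ)) / a = m₀ - ((1 - a) * δ) / a := by
          field_simp
          ring
        rw [hB, ← hBeq]
        exact h'
      exact hmono1.trans hwN1
    have hψx1 : ψ x1 ≤ (B : EReal) :=
      iSup_le fun n => EReal.coe_le_coe_iff.2 (hx1bound n)
    have : m ≤ (B : EReal) := (hmle x1 hx1).trans hψx1
    rw [hmeq] at this
    exact absurd (EReal.coe_le_coe_iff.1 this) (not_le.2 hBlt)
  have hext : IsExtreme ℝ K M := by
    constructor
    · exact fun y hy => hy.1
    · rintro x1 hx1 x2 hx2 x hxM hseg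
      obtain ⟨a, b, ha, hb, hab, hsum⟩ := hseg
      have hb' : b = 1 - a := by linarith
      have ha1 : a < 1 := by linarith
      refine (show x1 ∈ M ∧ x2 ∈ M from ⟨?_, ?_⟩).1
      · -- x1 ∈ M : use symmetry
        have hsum' : b • x2 + (1 - b) • x1 = x := by
          rw [show (1:ℝ) - b = a by linarith, add_comm]; exact hsum
        have hb1 : b < 1 := by linarith
        exact hkey x2 hx2 x1 hx1 b hb hb1 (by rw [hsum']; exact hxM)
      · have hsum'' : a • x1 + (1 - a) • x2 = x := by rw [← hb']; exact hsum
        exact hkey x1 hx1 x2 hx2 a ha ha1 (by rw [hsum'']; exact hxM)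
  obtain ⟨xe, hxe⟩ := hMcompact.extremePoints_nonempty hMne
  have hxeK : xe ∈ Set.extremePoints ℝ K :=
    hext.extremePoints_subset_extremePoints hxe
  have h0 : (0 : EReal) ≤ ψ xe := (hiff xe hxeK.1).1 (hle xe hxeK)
  have h1 : ψ xe ≤ m := hxe.1.2
  exact h0.trans h1


lemma my_exists_e {K : Set E} (hK : IsChoquetSimplex K) {s : E}
    (hs : s ∈ Set.extremePoints ℝ K) (hcl : IsClosed (compFacePt K s))
    (k : ℕ) (hk : 0 < k) :
    ∃ e : E → EReal, IsLAffPP K e ∧ e s = ⊤ ∧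
      (∀ x ∈ compFacePt K s, e x = (k : EReal)) ∧
      (∀ x ∈ K, x ∉ compFacePt K s → e x = ⊤) := by
  set u : ℕ → E → ℝ := fun n x => (k : ℝ) + n * myLam hK s x with hu
  set e : E → EReal := fun x => ⨆ n, ((u n x : ℝ) : EReal) with he
  have hsup_top : ∀ x, 0 < myLam hK s x → e x = ⊤ := by
    intro x hpos
    rw [he]
    apply my_iSup_coe_eq_top_of_unbounded
    intro B
    obtain ⟨n, hn⟩ := exists_nat_gt ((B - k) / myLam hK s x)
    refine ⟨n, ?_⟩
    rw [hu]
    have : (B - k) < n * myLam hK s x := by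
      rw [div_lt_iff₀ hpos] at hn
      linarith
    simp only
    linarith
  have hmem_val : ∀ x ∈ compFacePt K s, e x = (k : EReal) := by
    intro x hxF
    have h0 : myLam hK s x = 0 := myLam_zero_of_mem hK hs hxF
    have : ∀ n, u n x = (k : ℝ) := by
      intro n; rw [hu]; simp [h0]
    rw [he]
    simp only [this]
    rw [iSup_const]
    norm_cast
  refine ⟨e, ⟨?_, u, ?_, ?_, ?_, fun x _ => rfl⟩, ?_, hmem_val, ?_⟩
  · -- positivity
    intro x hx
    have h0 : (0 : EReal) < ((u 0 x : ℝ) : EReal) := by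
      have : (0:ℝ) < u 0 x := by
        rw [hu]; simp only
        have := myLam_nonneg hK s x
        push_cast
        nlinarith [Nat.one_le_cast (α := ℝ) |>.2 hk]
      exact_mod_cast this
    exact h0.trans_le (le_iSup (fun n => ((u n x : ℝ) : EReal)) 0)
  · intro n
    exact continuousOn_const.add (continuousOn_const.mul (myLam_continuousOn hK hs hcl))
  · intro n x hx y hy t ht0 ht1
    rw [hu]
    simp only
    rw [myLam_affine hK s hx hy ht0 ht1]
    ring
  · intro x hx a b hab
    simp only [hu]
    have := myLam_nonneg hK s x
    have hcast : (a : ℝ) ≤ (b : ℝ) := Nat.cast_le.2 hab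
    nlinarith
  · -- e s = ⊤
    apply hsup_top
    rw [myLam_self hK hs]
    norm_num
  · intro x hx hxF
    exact hsup_top x (myLam_pos_of_not_mem hK hs hx hxF)


lemma my_ereal_add_cancel {a b c : EReal} (ha1 : a ≠ ⊥) (ha2 : a ≠ ⊤)
    (h : a + b = a + c) : b = c := by
  lift a to ℝ using ⟨ha2, ha1⟩
  induction b with
  | bot =>
      rw [EReal.add_bot] at h
      rcases (EReal.add_eq_bot_iff.1 h.symm) with h' | h'
      · exact absurd h' (EReal.coe_ne_bot a)
      · rw [h']
  | coe rb =>
      induction c with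
      | bot =>   rw [EReal.add_bot] at h
                 rcases (EReal.add_eq_bot_iff.1 h) with h' | h'
                 · exact absurd h' (EReal.coe_ne_bot a)
                 · exact h'
      | coe rc =>
          rw [← EReal.coe_add, ← EReal.coe_add] at h
          have := EReal.coe_eq_coe_iff.1 h
          exact_mod_cast by linarith [this]
      | top =>
          rw [EReal.add_top_of_ne_bot (EReal.coe_ne_bot a), ← EReal.coe_add] at h
          exact absurd h (EReal.coe_ne_top _)
  | top =>
      rw [EReal.add_top_of_ne_bot (EReal.coe_ne_bot a)] at h
      induction c with
      | bot => rw [EReal.add_bot] at h; exact absurd h.symm (by simp)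
      | coe rc => rw [← EReal.coe_add] at h; exact absurd h.symm (EReal.coe_ne_top _)
      | top => rfl

lemma my_extreme_mem_face {K : Set E} {s : E} {x : E}
    (hxe : x ∈ Set.extremePoints ℝ K) (hne : x ≠ s) (hsK : s ∈ K) :
    x ∈ compFacePt K s := by
  refine ⟨hxe.1, ?_⟩
  rintro ⟨t, ⟨ht0, ht1⟩, z, hzK, hxeq⟩
  rcases eq_or_lt_of_le ht1 with h1 | hlt
  · subst h1
    simp at hxeq
    exact hne hxeq
  · have hseg : x ∈ openSegment ℝ s z :=
      ⟨t, 1 - t, ht0, by linarith, by ring, hxeq.symm⟩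
    exact hne (hxe.2 hsK hzK hseg).symm

lemma my_blowup {K : Set E} {s : E} (hsK : s ∈ K) {p : E → EReal}
    (hp : IsLAffPP K p) (hps : p s = ⊤) {x : E} (hx : x ∈ K)
    (hxF : x ∉ compFacePt K s) : p x = ⊤ := by
  obtain ⟨hpos, u, hcont, haff, hmono, hsup⟩ := hp
  have hdec : ∃ t ∈ Set.Ioc (0:ℝ) 1, ∃ z ∈ K, x = t • s + (1 - t) • z := by
    by_contra hne
    exact hxF ⟨hx, hne⟩
  obtain ⟨t, ⟨ht0, ht1⟩, z, hzK, hxeq⟩ := hdec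
  have hub : ∀ B : ℝ, ∃ n, B < u n s := by
    apply my_unbounded_of_iSup_top
    rw [← hsup s hsK, hps]
  rw [hsup x hx]
  apply my_iSup_coe_eq_top_of_unbounded
  intro B
  obtain ⟨n, hn⟩ := hub ((B - (1 - t) * u 0 z) / t)
  refine ⟨n, ?_⟩
  rw [hxeq, haff n s hsK z hzK t ht0.le ht1]
  rw [div_lt_iff₀ ht0] at hn
  have hmz : u 0 z ≤ u n z := hmono z hzK (Nat.zero_le n)
  nlinarith

end AuxLemmas

/-- on a metrizable Choquet simplex `K` with `s ∈ ∂ₑK` whose complementary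
face `{s}'` is closed, for every `k ∈ ℕ` (`k ≥ 1`) there is a strictly positive affine
lower semicontinuous `e : K → (0,∞]` with `e s = ∞` and `e ≡ k` on `{s}'`; consequently,
if `g, h, f, d ∈ LAff(K)⁺⁺` satisfy `f + g = f + h = d` on `K`, `d` is finite on `∂ₑK`
except exactly at `s`, `g` is finite on `∂ₑK`, and `h s = ∞`, then `g + e = h + k` and
`e + d = k + d` on `K`, for such an `e` and some `k`. -/
theorem exists_laff_function_infinite_at_s
    {E : Type*} [AddCommGroup E] [Module ℝ E] [TopologicalSpace E]
    [IsTopologicalAddGroup E] [ContinuousSMul ℝ E] [T2Space E] [LocallyConvexSpace ℝ E]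
    [TopologicalSpace.MetrizableSpace E] [MeasurableSpace E] [BorelSpace E]
    (K : Set E) (hK : IsChoquetSimplex K)
    (s : E) (hs : s ∈ Set.extremePoints ℝ K)
    (hcl : IsClosed (compFacePt K s)) :
    (∀ k : ℕ, 0 < k → ∃ e : E → EReal, IsLAffPP K e ∧ e s = ⊤ ∧
      ∀ x ∈ compFacePt K s, e x = (k : EReal)) ∧
    (∀ g h f d : E → EReal,
      IsLAffPP K g → IsLAffPP K h → IsLAffPP K f → IsLAffPP K d →
      (∀ x ∈ K, f x + g x = d x) → (∀ x ∈ K, f x + h x = d x) →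
      (∀ x ∈ Set.extremePoints ℝ K, (d x = ⊤ ↔ x = s)) →
      (∀ x ∈ Set.extremePoints ℝ K, g x ≠ ⊤) →
      h s = ⊤ →
      ∃ (k : ℕ) (e : E → EReal), 0 < k ∧ IsLAffPP K e ∧ e s = ⊤ ∧
        (∀ x ∈ compFacePt K s, e x = (k : EReal)) ∧
        (∀ x ∈ K, g x + e x = h x + (k : EReal)) ∧
        (∀ x ∈ K, e x + d x = (k : EReal) + d x)) := by
  have hsK : s ∈ K := hs.1
  constructor
  · intro k hk
    obtain ⟨e, h1, h2, h3, _⟩ := my_exists_e hK hs hcl k hk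
    exact ⟨e, h1, h2, h3⟩
  · intro g h f d hg hh hf hd hfg hfh hdtop hgfin hhs
    obtain ⟨e, heL, hes, heF, heoff⟩ := my_exists_e hK hs hcl 1 one_pos
    have hdstop : d s = ⊤ := (hdtop s hs).2 rfl
    -- g = h on extreme points other than s
    have hgh_ext : ∀ x ∈ Set.extremePoints ℝ K, x ≠ s → g x = h x := by
      intro x hxe hxne
      have hxK : x ∈ K := hxe.1
      have hdne : d x ≠ ⊤ := fun hc => hxne ((hdtop x hxe).1 hc)
      have hfne_top : f x ≠ ⊤ := by
        intro hc
        apply hdne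
        rw [← hfg x hxK, hc]
        exact EReal.top_add_of_ne_bot (ne_bot_of_gt (hg.1 x hxK))
      have hfne_bot : f x ≠ ⊥ := ne_bot_of_gt (hf.1 x hxK)
      exact my_ereal_add_cancel hfne_bot hfne_top ((hfg x hxK).trans (hfh x hxK).symm)
    obtain ⟨hgpos, ug, hgc, hga, hgm, hgsup⟩ := hg
    obtain ⟨hhpos, vh, hhc, hha, hhm, hhsup⟩ := hh
    -- claim 1 : g ≤ h on K
    have claim1 : ∀ x ∈ K, g x ≤ h x := by
      intro x hx
      rw [hgsup x hx]
      apply iSup_le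
      intro n
      have hle : ∀ y ∈ Set.extremePoints ℝ K, ((ug n y : ℝ) : EReal) ≤
          ⨆ m, ((vh m y : ℝ) : EReal) := by
        intro y hye
        rw [← hhsup y hye.1]
        by_cases hys : y = s
        · rw [hys, hhs]; exact le_top
        · rw [← hgh_ext y hye hys, hgsup y hye.1]
          exact le_iSup (fun m => ((ug m y : ℝ) : EReal)) n
      have := my_bauer hK.1 hK.2.1 (hgc n) (hga n) hhc hha hhm hle x hx
      rwa [← hhsup x hx] at this
    -- claim 2 : h ≤ g on the complementary face
    have claim2 : ∀ x ∈ compFacePt K s, h x ≤ g x := by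
      intro x hxF
      have hxK : x ∈ K := hxF.1
      rw [hhsup x hxK]
      apply iSup_le
      intro n
      set c : ℝ := max 0 (vh n s - ug 0 s) with hc
      have hc0 : 0 ≤ c := le_max_left _ _
      have hcs : vh n s - c ≤ ug 0 s := by
        have := le_max_right 0 (vh n s - ug 0 s)
        rw [← hc] at this
        linarith
      set u' : E → ℝ := fun y => vh n y - c * myLam hK s y with hu'
      have hu'cont : ContinuousOn u' K :=
        (hhc n).sub (continuousOn_const.mul (myLam_continuousOn hK hs hcl))
      have hu'aff : ∀ p ∈ K, ∀ q ∈ K, ∀ t : ℝ, 0 ≤ t → t ≤ 1 →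
          u' (t • p + (1 - t) • q) = t * u' p + (1 - t) * u' q := by
        intro p hp q hq t ht0 ht1
        rw [hu']
        simp only
        rw [hha n p hp q hq t ht0 ht1, myLam_affine hK s hp hq ht0 ht1]
        ring
      have hle : ∀ y ∈ Set.extremePoints ℝ K, ((u' y : ℝ) : EReal) ≤
          ⨆ m, ((ug m y : ℝ) : EReal) := by
        intro y hye
        by_cases hys : y = s
        · subst hys
          have : u' y ≤ ug 0 y := by
            rw [hu']
            simp only
            rw [myLam_self hK hs]
            linarith
          exact le_trans (EReal.coe_le_coe_iff.2 this)
            (le_iSup (fun m => ((ug m y : ℝ) : EReal)) 0)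
        · have hyF : y ∈ compFacePt K s := my_extreme_mem_face hye hys hsK
          have hlam0 : myLam hK s y = 0 := myLam_zero_of_mem hK hs hyF
          have hval : u' y = vh n y := by rw [hu']; simp [hlam0]
          rw [hval, ← hgsup y hye.1, hgh_ext y hye hys, hhsup y hye.1]
          exact le_iSup (fun m => ((vh m y : ℝ) : EReal)) n
      have hres := my_bauer hK.1 hK.2.1 hu'cont hu'aff hgc hga hgm hle x hxK
      have hval : u' x = vh n x := by
        rw [hu']
        simp [myLam_zero_of_mem hK hs hxF]
      rw [hval, ← hgsup x hxK] at hres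
      exact hres
    have hgh_face : ∀ x ∈ compFacePt K s, g x = h x :=
      fun x hxF => le_antisymm (claim1 x hxF.1) (claim2 x hxF)
    refine ⟨1, e, one_pos, heL, hes, heF, ?_, ?_⟩
    · intro x hx
      by_cases hxF : x ∈ compFacePt K s
      · rw [heF x hxF, hgh_face x hxF]
      · have heT : e x = ⊤ := heoff x hx hxF
        have hhT : h x = ⊤ := my_blowup hsK ⟨hhpos, vh, hhc, hha, hhm, hhsup⟩ hhs hx hxF
        rw [heT, hhT, EReal.add_top_of_ne_bot (ne_bot_of_gt (hgpos x hx)), EReal.top_add_of_ne_bot (EReal.natCast_ne_bot 1)]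
    · intro x hx
      by_cases hxF : x ∈ compFacePt K s
      · rw [heF x hxF]
      · have heT : e x = ⊤ := heoff x hx hxF
        have hdT : d x = ⊤ := my_blowup hsK hd hdstop hx hxF
        rw [heT, hdT, EReal.top_add_of_ne_bot (by simp : (⊤:EReal) ≠ ⊥),
          EReal.add_top_of_ne_bot (EReal.natCast_ne_bot 1)]
end

section
/- Let X be a compact Hausdorff space, M₁⁺(X) the space of Radon probability measures on X with the weak-* topology, and s ∈ X. The complementary face of {ε_s} in M₁⁺(X) is {μ ∈ M₁⁺(X) : μ({s}) = 0}, and this face is closed in M₁⁺(X) if and only if {s} is open in X (i.e. s is isolated). -/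
open MeasureTheory
open scoped NNReal
open scoped ENNReal Topology BoundedContinuousFunction

/-- for a compact Hausdorff space `X` and `s ∈ X`, the complementary face
of `{ε_s}` in the compact convex set `M₁⁺(X)` of probability measures (with the weak-*
topology, realized inside the finite measures) is `{μ : μ({s}) = 0}`, and this face is
closed iff `{s}` is open in `X` (i.e. `s` is isolated). -/
theorem compFace_dirac_eq_and_closed_iff_isolated
    {X : Type*} [TopologicalSpace X] [CompactSpace X] [T2Space X]
    [MeasurableSpace X] [BorelSpace X] (s : X) :
    letI K : Set (FiniteMeasure X) := {μ | μ Set.univ = 1}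
    letI δs : FiniteMeasure X := ⟨MeasureTheory.Measure.dirac s, inferInstance⟩
    letI F' : Set (FiniteMeasure X) :=
      {μ ∈ K | ¬ ∃ t : ℝ≥0, 0 < t ∧ t ≤ 1 ∧ ∃ z ∈ K, μ = t • δs + (1 - t) • z}
    F' = {μ ∈ K | μ {s} = 0} ∧ (IsClosed F' ↔ IsOpen ({s} : Set X)) := by
  set δs : FiniteMeasure X := ⟨MeasureTheory.Measure.dirac s, inferInstance⟩ with hδdef
  set K : Set (FiniteMeasure X) := {μ | μ Set.univ = 1} with hKdef
  set F' : Set (FiniteMeasure X) :=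
    {μ | μ ∈ K ∧ ¬ ∃ t : ℝ≥0, 0 < t ∧ t ≤ 1 ∧ ∃ z ∈ K, μ = t • δs + (1 - t) • z} with hFdef
  have hms : MeasurableSet ({s} : Set X) := measurableSet_singleton s
  have hδs_apply : ∀ A : Set X, (δs : Measure X) A = Measure.dirac s A := fun _ => rfl
  have hδsK : δs ∈ K := by
    show ((δs : Measure X) Set.univ).toNNReal = 1
    simp [hδs_apply]
  have hδss : δs {s} = 1 := by
    show ((δs : Measure X) {s}).toNNReal = 1
    rw [hδs_apply]
    simp [Measure.dirac_apply' _ hms]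
  -- the set equality
  have hEq : F' = {μ ∈ K | μ {s} = 0} := by
    ext μ
    simp only [F', K, Set.mem_setOf_eq, Set.mem_sep_iff]
    constructor
    · rintro ⟨hμK, hnot⟩
      refine ⟨hμK, ?_⟩
      by_contra hc
      apply hnot
      set c : ℝ≥0 := μ {s} with hcdef
      have hcoe : ((c : ℝ≥0)) = ((μ : Measure X) {s}).toNNReal := rfl
      have hcenn : ((c : ℝ≥0) : ℝ≥0∞) = (μ : Measure X) {s} :=
        FiniteMeasure.ennreal_coeFn_eq_coeFn_toMeasure μ {s}
      have hunivenn : (μ : Measure X) Set.univ = 1 := by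
        have := FiniteMeasure.ennreal_coeFn_eq_coeFn_toMeasure μ Set.univ
        rw [hμK] at this
        simpa using this.symm
      have hc1 : c ≤ 1 := by
        have h := μ.apply_mono (Set.subset_univ {s})
        rw [hμK] at h
        exact h
      have hcpos : 0 < c := pos_iff_ne_zero.mpr hc
      refine ⟨c, hcpos, hc1, ?_⟩
      -- decomposition of the measure
      have hrestr : (μ : Measure X).restrict {s} = (c : ℝ≥0∞) • Measure.dirac s := by
        rw [Measure.restrict_singleton, hcenn]
      by_cases hone : c = 1
      · -- μ = δs
        refine ⟨δs, hδsK, ?_⟩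
        have hcompl : (μ : Measure X) {s}ᶜ = 0 := by
          rw [measure_compl hms (measure_ne_top _ _), hunivenn, ← hcenn, hone]
          simp
        have hμδ : μ = δs := by
          apply FiniteMeasure.toMeasure_injective
          have h1 : (μ : Measure X) = (μ : Measure X).restrict {s} +
              (μ : Measure X).restrict {s}ᶜ :=
            (Measure.restrict_add_restrict_compl hms).symm
          rw [h1, hrestr, hone, Measure.restrict_eq_zero.mpr hcompl]
          simp
          rfl
        rw [hμδ, hone]
        simp
      · have hlt : c < 1 := lt_of_le_of_ne hc1 hone
        have hne : (1 - c : ℝ≥0) ≠ 0 := ne_of_gt (tsub_pos_of_lt hlt)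
        set ν : Measure X := (μ : Measure X).restrict {s}ᶜ with hν
        have hνuniv : ν Set.univ = ((1 - c : ℝ≥0) : ℝ≥0∞) := by
          have hadd := measure_add_measure_compl (μ := (μ : Measure X)) hms
          rw [hunivenn, ← hcenn] at hadd
          have : (μ : Measure X) {s}ᶜ = 1 - (c : ℝ≥0∞) := by
            rw [← hadd, ENNReal.add_sub_cancel_left (by simp)]
          rw [hν, Measure.restrict_apply MeasurableSet.univ]
          simp only [Set.univ_inter]
          rw [this, ← ENNReal.coe_one, ← ENNReal.coe_sub]
        refine ⟨(show FiniteMeasure X from ⟨(1 - c)⁻¹ • ν, inferInstance⟩), ?_, ?_⟩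
        · show ((((1 - c)⁻¹ • ν : Measure X)) Set.univ).toNNReal = 1
          rw [Measure.smul_apply, hνuniv, ENNReal.smul_def, smul_eq_mul,
            ← ENNReal.coe_mul, ENNReal.toNNReal_coe, inv_mul_cancel₀ hne]
        · apply FiniteMeasure.toMeasure_injective
          rw [FiniteMeasure.toMeasure_add, FiniteMeasure.toMeasure_smul,
            FiniteMeasure.toMeasure_smul]
          show (μ : Measure X) = c • (δs : Measure X) + (1 - c) • ((1 - c)⁻¹ • ν)
          rw [smul_smul, mul_inv_cancel₀ hne, one_smul]
          have h1 : (μ : Measure X) = (μ : Measure X).restrict {s} + ν :=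
            (Measure.restrict_add_restrict_compl hms).symm
          rw [h1, hrestr, ENNReal.smul_def]
          rfl
    · rintro ⟨hμK, hμ0⟩
      refine ⟨hμK, ?_⟩
      rintro ⟨t, htpos, ht1, z, hzK, hμeq⟩
      have : μ {s} = t * δs {s} + (1 - t) * z {s} := by
        rw [hμeq, FiniteMeasure.coeFn_add]
        simp [FiniteMeasure.coeFn_smul]
      rw [hμ0, hδss, mul_one] at this
      have : t ≤ 0 := by
        have h := this.symm.le
        exact le_trans (le_add_right le_rfl) h
      exact absurd this (not_le.mpr htpos)
  refine ⟨hEq, ?_⟩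
  constructor
  · -- closed → {s} open, by contraposition
    intro hclosed
    by_contra hopen
    have hne : (𝓝[≠] s).NeBot := by
      rw [Filter.neBot_iff]
      intro h
      exact hopen ((isOpen_singleton_iff_punctured_nhds s).mpr h)
    -- the net of dirac measures at points x ≠ s
    set d : X → FiniteMeasure X := fun x => ⟨Measure.dirac x, inferInstance⟩ with hd
    have hdK : ∀ x : X, d x ∈ K := by
      intro x
      show ((Measure.dirac x : Measure X) Set.univ).toNNReal = 1
      simp
    have htend : Filter.Tendsto d (𝓝[≠] s) (𝓝 δs) := by
      rw [FiniteMeasure.tendsto_iff_forall_lintegral_tendsto]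
      intro f
      have h1 : ∀ x : X, ∫⁻ y, f y ∂((d x : Measure X)) = f x := by
        intro x
        exact lintegral_dirac x _
      have h2 : ∫⁻ y, f y ∂((δs : Measure X)) = f s := lintegral_dirac s _
      simp only [h1, h2]
      have hf : Filter.Tendsto (fun x : X => (f x : ℝ≥0∞)) (𝓝 s) (𝓝 (f s)) :=
        (ENNReal.continuous_coe.tendsto _).comp (f.continuous.tendsto s)
      exact hf.mono_left nhdsWithin_le_nhds
    have hev : ∀ᶠ x in 𝓝[≠] s, d x ∈ F' := by
      filter_upwards [self_mem_nhdsWithin] with x hx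
      rw [hEq]
      refine ⟨hdK x, ?_⟩
      show ((Measure.dirac x : Measure X) {s}).toNNReal = 0
      rw [Measure.dirac_apply' _ hms]
      simp only [Set.mem_compl_iff, Set.mem_singleton_iff] at hx
      simp [Set.indicator_of_notMem, hx]
    have hδF : δs ∈ F' := hclosed.mem_of_tendsto htend hev
    rw [hEq] at hδF
    have h0 : δs {s} = 0 := hδF.2
    rw [hδss] at h0
    exact one_ne_zero h0
  · -- {s} open → closed
    intro hopen
    have hclopen : IsClopen ({s} : Set X) := ⟨isClosed_singleton, hopen⟩
    -- indicator of {s} as a bounded continuous ℝ≥0-valued function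
    set f : X →ᵇ ℝ≥0 :=
      BoundedContinuousFunction.mkOfCompact
        ⟨Set.indicator {s} 1, continuous_indicator (by simp [hclopen]) <|
          continuous_const.continuousOn⟩ with hf
    have hfev : ∀ μ : FiniteMeasure X, μ.testAgainstNN f = μ {s} := by
      intro μ
      show (∫⁻ x, (f x : ℝ≥0∞) ∂(μ : Measure X)).toNNReal = ((μ : Measure X) {s}).toNNReal
      congr 1
      have : ∀ x : X, (f x : ℝ≥0∞) = Set.indicator {s} (fun _ => (1 : ℝ≥0∞)) x := by
        intro x
        rw [hf]
        show ((Set.indicator {s} 1 x : ℝ≥0) : ℝ≥0∞) = _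
        by_cases hx : x ∈ ({s} : Set X) <;> simp [hx]
      simp_rw [this]
      rw [lintegral_indicator hms]
      simp
    rw [hEq]
    have h1 : IsClosed {μ : FiniteMeasure X | μ Set.univ = 1} := by
      have : {μ : FiniteMeasure X | μ Set.univ = 1} =
          (fun μ : FiniteMeasure X => μ.mass) ⁻¹' {1} := rfl
      rw [this]
      exact IsClosed.preimage FiniteMeasure.continuous_mass isClosed_singleton
    have h2 : IsClosed {μ : FiniteMeasure X | μ {s} = 0} := by
      have : {μ : FiniteMeasure X | μ {s} = 0} =
          (fun μ : FiniteMeasure X => μ.testAgainstNN f) ⁻¹' {0} := by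
        ext μ
        simp [hfev μ]
      rw [this]
      exact IsClosed.preimage (FiniteMeasure.continuous_testAgainstNN_eval f) isClosed_singleton
    exact h1.inter h2
end

section
/- Let B be a unital *-ring, I a two-sided ideal, π : B → B/I the quotient map, and v ∈ B a partial isometry such that π(v) is a unitary in B/I. If there exists r ∈ I with r*r = 1 − v*v and rr* = 1 − vv*, then z := v + r is a unitary in B with π(z) = π(v). -/
/-- Let `B` be a unital *-ring (in which `x* x = 0 → x = 0`, e.g. a
C*-algebra), `I` a two-sided ideal, and `π : B → B/I` the quotient map (here realized as a
surjective star-preserving ring homomorphism with kernel `I`).  If `v` is a partial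
isometry such that `π v` is unitary, and `r ∈ I` satisfies `r* r = 1 - v* v` and
`r r* = 1 - v v*`, then `z := v + r` is a unitary lifting `π v`. -/
theorem unitary_lift_of_partial_isometry
    {B C : Type*} [Ring B] [StarRing B] [Ring C] [StarRing C]
    (hfaith : ∀ x : B, star x * x = 0 → x = 0)
    (π : B →+* C) (hπstar : ∀ x : B, π (star x) = star (π x))
    (hπsurj : Function.Surjective π)
    (I : TwoSidedIdeal B) (hker : ∀ x : B, x ∈ I ↔ π x = 0)
    (v : B) (hv : v * star v * v = v)
    (hu₁ : star (π v) * π v = 1) (hu₂ : π v * star (π v) = 1)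
    (r : B) (hrI : r ∈ I)
    (hr₁ : star r * r = 1 - star v * v) (hr₂ : r * star r = 1 - v * star v) :
    star (v + r) * (v + r) = 1 ∧ (v + r) * star (v + r) = 1 ∧ π (v + r) = π v := by
  have hp : star v * v * (star v * v) = star v * v := by
    calc star v * v * (star v * v) = star v * (v * star v * v) := by noncomm_ring
    _ = star v * v := by rw [hv]
  have hq : v * star v * (v * star v) = v * star v := by
    calc v * star v * (v * star v) = (v * star v * v) * star v := by noncomm_ring
    _ = v * star v := by rw [hv]
  -- cross terms vanish
  have h1 : star v * r = 0 := by
    apply hfaith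
    calc star (star v * r) * (star v * r)
        = star r * (v * star v) * r := by simp [star_mul, mul_assoc]
      _ = star r * (1 - r * star r) * r := by rw [hr₂]; noncomm_ring
      _ = star r * r - star r * r * (star r * r) := by noncomm_ring
      _ = (1 - star v * v) - (1 - star v * v) * (1 - star v * v) := by rw [hr₁]
      _ = star v * v - star v * v * (star v * v) := by noncomm_ring
      _ = 0 := by rw [hp, sub_self]
  have h2 : star r * v = 0 := by
    apply hfaith
    calc star (star r * v) * (star r * v)
        = star v * (r * star r) * v := by simp [star_mul, mul_assoc]
      _ = star v * (1 - v * star v) * v := by rw [hr₂]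
      _ = star v * v - star v * (v * star v * v) := by noncomm_ring
      _ = star v * v - star v * v := by rw [hv]
      _ = 0 := sub_self _
  have h3 : r * star v = 0 := by
    apply hfaith
    calc star (r * star v) * (r * star v)
        = v * (star r * r) * star v := by simp [star_mul, mul_assoc]
      _ = v * (1 - star v * v) * star v := by rw [hr₁]
      _ = v * star v - (v * star v * v) * star v := by noncomm_ring
      _ = v * star v - v * star v := by rw [hv]
      _ = 0 := sub_self _
  have h4 : v * star r = 0 := by
    have := congrArg star h3
    simpa [star_mul] using this
  refine ⟨?_, ?_, ?_⟩
  · calc star (v + r) * (v + r)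
        = star v * v + star v * r + (star r * v + star r * r) := by
          simp [star_add]; noncomm_ring
      _ = star v * v + 0 + (0 + (1 - star v * v)) := by rw [h1, h2, hr₁]
      _ = 1 := by noncomm_ring
  · calc (v + r) * star (v + r)
        = v * star v + v * star r + (r * star v + r * star r) := by
          simp [star_add]; noncomm_ring
      _ = v * star v + 0 + (0 + (1 - v * star v)) := by rw [h4, h3, hr₂]
      _ = 1 := by noncomm_ring
  · have : π r = 0 := (hker r).mp hrI
    simp [map_add, this]
end
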